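/- arXiv:2411.02100 — 2 statements merged into one kernel-verified Lean document; each statement's English description precedes it below -/
import Mathlib

section
/- Let σ > 0, ν_min > 0, G ≥ 0, and let ν : ℝ^d → ℝ be continuously differentiable with ν(x) ≥ ν_min and |∇ν(x)| ≤ G for all x. Let δ satisfy 0 < δ ≤ min{1/(3σ), ν_min/(12G²)} (with the second bound read as no constraint when G = 0). Then for every compactly supported, continuously differentiable v : ℝ^d → ℝ^d and q : ℝ^d → ℝ, the stress-divergence stabilised bilinear form satisfies the coercivity estimate σ∫|v|² + 2∫ν|∇^s v|² + δ∫|∇q|² + δ∫∇q·(σv − 2(∇v)ᵀ∇ν) ≥ (1/2)(σ∫|v|² + ν_min∫|∇v|² + δ∫|∇q|²), all integrals over ℝ^d. -/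
open MeasureTheory

/-- Partial derivative `∂ⱼ f` of a scalar field `f : ℝ^d → ℝ`. -/
noncomputable def pd {d : ℕ} (j : Fin d) (f : (Fin d → ℝ) → ℝ) (x : Fin d → ℝ) : ℝ :=
  fderiv ℝ f x (Pi.single j 1)

/-- Squared Frobenius norm of the symmetric gradient `∇ˢv = (∇v + (∇v)ᵀ)/2`. -/
noncomputable def symGradSq {d : ℕ} (v : (Fin d → ℝ) → Fin d → ℝ) (x : Fin d → ℝ) : ℝ :=
  ∑ i, ∑ j, ((pd j (fun z => v z i) x + pd i (fun z => v z j) x) / 2) ^ 2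

/-- Squared Frobenius norm of the full gradient `∇v`. -/
noncomputable def gradSq {d : ℕ} (v : (Fin d → ℝ) → Fin d → ℝ) (x : Fin d → ℝ) : ℝ :=
  ∑ i, ∑ j, (pd j (fun z => v z i) x) ^ 2

open Filter
open scoped Convolution Topology Pointwise

variable {d : ℕ}


lemma pd_proj {v : (Fin d → ℝ) → Fin d → ℝ} (hv : Differentiable ℝ v) (i j : Fin d)
    (x : Fin d → ℝ) : pd j (fun z => v z i) x = fderiv ℝ v x (Pi.single j 1) i := by
  have h := HasFDerivAt.comp x
    (ContinuousLinearMap.proj (R := ℝ) (φ := fun _ : Fin d => ℝ) i).hasFDerivAt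
    (hv x).hasFDerivAt
  have h2 : HasFDerivAt (fun z => v z i)
      ((ContinuousLinearMap.proj (R := ℝ) (φ := fun _ : Fin d => ℝ) i).comp (fderiv ℝ v x)) x := h
  rw [pd, h2.fderiv]; rfl

lemma integ {f : (Fin d → ℝ) → ℝ} (h1 : Continuous f) (h2 : HasCompactSupport f) :
    Integrable f volume :=
  h1.integrable_of_hasCompactSupport h2

lemma continuous_pd {f : (Fin d → ℝ) → ℝ} (hf : ContDiff ℝ 1 f) (j : Fin d) :
    Continuous (pd j f) :=
  (hf.continuous_fderiv one_ne_zero).clm_apply continuous_const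

lemma hcs_pd {f : (Fin d → ℝ) → ℝ} (hf : HasCompactSupport f) (j : Fin d) :
    HasCompactSupport (pd j f) :=
  (hf.fderiv ℝ).comp_left (g := fun L : (Fin d → ℝ) →L[ℝ] ℝ => L (Pi.single j 1)) rfl

lemma pd_contDiff {f : (Fin d → ℝ) → ℝ} (hf : ContDiff ℝ 2 f) (i : Fin d) :
    ContDiff ℝ 1 (pd i f) :=
  (hf.fderiv_right le_rfl).clm_apply contDiff_const

lemma pd_pd_symm {f : (Fin d → ℝ) → ℝ} (hf : ContDiff ℝ 2 f) (i j : Fin d) (x : Fin d → ℝ) :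
    pd j (pd i f) x = pd i (pd j f) x := by
  have hd : DifferentiableAt ℝ (fderiv ℝ f) x :=
    ((hf.fderiv_right (m := 1) le_rfl).differentiable one_ne_zero) x
  have key : ∀ a b : Fin d,
      pd b (pd a f) x = fderiv ℝ (fderiv ℝ f) x (Pi.single b 1) (Pi.single a 1) := by
    intro a b
    have : pd a f = fun y => (fderiv ℝ f y) (Pi.single a 1) := rfl
    rw [pd, this, fderiv_clm_apply hd (differentiableAt_const _)]
    simp
  rw [key i j, key j i]
  exact (hf.contDiffAt.isSymmSndFDerivAt (by simp)) _ _

lemma ibp {f g : (Fin d → ℝ) → ℝ} (hf : ContDiff ℝ 1 f) (hcf : HasCompactSupport f)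
    (hg : ContDiff ℝ 1 g) (j : Fin d) :
    ∫ x, pd j f x * g x = - ∫ x, f x * pd j g x := by
  have h1 : Integrable (fun x => fderiv ℝ f x (Pi.single j 1) * g x) volume :=
    integ ((continuous_pd hf j).mul hg.continuous) ((hcs_pd hcf j).mul_right)
  have h2 : Integrable (fun x => f x * fderiv ℝ g x (Pi.single j 1)) volume :=
    integ (hf.continuous.mul (continuous_pd hg j)) (hcf.mul_right)
  have h3 : Integrable (fun x => f x * g x) volume :=
    integ (hf.continuous.mul hg.continuous) (hcf.mul_right)
  have := integral_mul_fderiv_eq_neg_fderiv_mul_of_integrable h1 h2 h3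
    (fun x _ => hf.differentiable one_ne_zero x) (fun x _ => hg.differentiable one_ne_zero x)
  simp only [pd]
  linarith [this]

lemma comp_i {n : WithTop ℕ∞} {v : (Fin d → ℝ) → Fin d → ℝ} (hv : ContDiff ℝ n v) (i : Fin d) :
    ContDiff ℝ n (fun z => v z i) :=
  (ContinuousLinearMap.proj i (R := ℝ) (φ := fun _ : Fin d => ℝ)).contDiff.comp hv

lemma hcs_i {v : (Fin d → ℝ) → Fin d → ℝ} (hv : HasCompactSupport v) (i : Fin d) :
    HasCompactSupport (fun z => v z i) :=
  hv.comp_left (g := fun w : Fin d → ℝ => w i) rfl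

lemma korn_smooth {u : (Fin d → ℝ) → Fin d → ℝ} (hu : ContDiff ℝ 2 u)
    (hcu : HasCompactSupport u) :
    0 ≤ ∫ x, ∑ i, ∑ j, pd j (fun z => u z i) x * pd i (fun z => u z j) x := by
  have hC2 : ∀ i : Fin d, ContDiff ℝ 2 (fun z => u z i) := fun i => comp_i hu i
  have hC1 : ∀ i : Fin d, ContDiff ℝ 1 (fun z => u z i) := fun i => (hC2 i).of_le one_le_two
  have hcs : ∀ i : Fin d, HasCompactSupport (fun z => u z i) := fun i => hcs_i hcu i
  have hint : ∀ i j : Fin d,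
      Integrable (fun x => pd j (fun z => u z i) x * pd i (fun z => u z j) x) volume := fun i j =>
    integ ((continuous_pd (hC1 i) j).mul (continuous_pd (hC1 j) i))
      ((hcs_pd (hcs i) j).mul_right)
  have hint2 : ∀ i j : Fin d,
      Integrable (fun x => pd i (fun z => u z i) x * pd j (fun z => u z j) x) volume := fun i j =>
    integ ((continuous_pd (hC1 i) i).mul (continuous_pd (hC1 j) j))
      ((hcs_pd (hcs i) i).mul_right)
  have key : ∀ i j : Fin d,
      ∫ x, pd j (fun z => u z i) x * pd i (fun z => u z j) x
        = ∫ x, pd i (fun z => u z i) x * pd j (fun z => u z j) x := by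
    intro i j
    have e1 : ∫ x, pd j (fun z => u z i) x * pd i (fun z => u z j) x
        = - ∫ x, (fun z => u z i) x * pd j (pd i (fun z => u z j)) x :=
      ibp (hC1 i) (hcs i) (pd_contDiff (hC2 j) i) j
    have e2 : (fun x => (fun z => u z i) x * pd j (pd i (fun z => u z j)) x)
        = fun x => (fun z => u z i) x * pd i (pd j (fun z => u z j)) x := by
      funext x; rw [pd_pd_symm (hC2 j) j i x]
    have e3 : ∫ x, pd i (fun z => u z i) x * pd j (fun z => u z j) x
        = - ∫ x, (fun z => u z i) x * pd i (pd j (fun z => u z j)) x :=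
      ibp (hC1 i) (hcs i) (pd_contDiff (hC2 j) j) i
    rw [e1, e2, ← e3]
  calc (0:ℝ) ≤ ∫ x, (∑ i, pd i (fun z => u z i) x)^2 := by
        apply integral_nonneg; intro x; positivity
    _ = ∫ x, ∑ i, ∑ j, pd i (fun z => u z i) x * pd j (fun z => u z j) x := by
        congr 1; funext x
        rw [sq, Finset.sum_mul_sum]
    _ = ∑ i, ∑ j, ∫ x, pd i (fun z => u z i) x * pd j (fun z => u z j) x := by
        rw [integral_finset_sum _ (fun i _ => integrable_finset_sum _ (fun j _ => hint2 i j))]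
        exact Finset.sum_congr rfl fun i _ => integral_finset_sum _ (fun j _ => hint2 i j)
    _ = ∑ i, ∑ j, ∫ x, pd j (fun z => u z i) x * pd i (fun z => u z j) x := by
        exact Finset.sum_congr rfl fun i _ => Finset.sum_congr rfl fun j _ => (key i j).symm
    _ = ∫ x, ∑ i, ∑ j, pd j (fun z => u z i) x * pd i (fun z => u z j) x := by
        rw [integral_finset_sum _ (fun i _ => integrable_finset_sum _ (fun j _ => hint i j))]
        exact Finset.sum_congr rfl fun i _ => (integral_finset_sum _ (fun j _ => hint i j)).symm

lemma pdu_eq {v : (Fin d → ℝ) → Fin d → ℝ} (hv : ContDiff ℝ 1 v)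
    (hcv : HasCompactSupport v) (φ : ContDiffBump (0 : Fin d → ℝ))
    (hu : Differentiable ℝ (φ.normed volume ⋆[ContinuousLinearMap.lsmul ℝ ℝ, volume] v))
    (i j : Fin d) (x : Fin d → ℝ) :
    pd j (fun z => (φ.normed volume ⋆[ContinuousLinearMap.lsmul ℝ ℝ, volume] v) z i) x
      = (φ.normed volume ⋆[ContinuousLinearMap.lsmul ℝ ℝ, volume]
          (fun y => fderiv ℝ v y (Pi.single j 1) i)) x := by
  set L : ℝ →L[ℝ] (Fin d → ℝ) →L[ℝ] (Fin d → ℝ) := ContinuousLinearMap.lsmul ℝ ℝ with hL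
  have hder := hcv.hasFDerivAt_convolution_right (μ := volume) L
    ((φ.integrable_normed (μ := volume)).locallyIntegrable) hv x
  rw [pd_proj hu i j x, hder.fderiv]
  have hint : Integrable
      (fun t => (L.precompR (Fin d → ℝ)) (φ.normed volume t) (fderiv ℝ v (x - t)))
      volume := by
    apply Continuous.integrable_of_hasCompactSupport
    · exact ((L.precompR (Fin d → ℝ)).continuous.comp φ.continuous_normed).clm_apply
        ((hv.continuous_fderiv one_ne_zero).comp (continuous_const.sub continuous_id))
    · apply (φ.hasCompactSupport_normed (μ := volume)).mono
      intro t ht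
      simp only [Function.mem_support] at ht ⊢
      intro h0
      apply ht
      rw [h0]
      simp
  set E2 : ((Fin d → ℝ) →L[ℝ] (Fin d → ℝ)) →L[ℝ] ℝ :=
    (ContinuousLinearMap.proj (R := ℝ) (φ := fun _ : Fin d => ℝ) i).comp
      ((ContinuousLinearMap.apply ℝ (Fin d → ℝ)) (Pi.single j 1)) with hE2
  have step1 : ((φ.normed volume ⋆[L.precompR (Fin d → ℝ), volume] fderiv ℝ v) x)
      (Pi.single j 1) i
      = E2 ((φ.normed volume ⋆[L.precompR (Fin d → ℝ), volume] fderiv ℝ v) x) := rfl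
  rw [step1, convolution_def, ← E2.integral_comp_comm hint, convolution_def]
  apply integral_congr_ae
  apply Filter.Eventually.of_forall
  intro t
  simp [hE2, hL, ContinuousLinearMap.precompR_apply, smul_eq_mul]

lemma korn {v : (Fin d → ℝ) → Fin d → ℝ} (hv : ContDiff ℝ 1 v)
    (hcv : HasCompactSupport v) :
    0 ≤ ∫ x, ∑ i, ∑ j, pd j (fun z => v z i) x * pd i (fun z => v z j) x := by
  classical
  -- bump family
  have hr : ∀ n : ℕ, (0:ℝ) < ((n:ℝ)+1)⁻¹ := fun n => by positivity
  let φ : ℕ → ContDiffBump (0 : Fin d → ℝ) := fun n =>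
    ⟨((n:ℝ)+1)⁻¹/2, ((n:ℝ)+1)⁻¹, by positivity, by
      have := hr n; linarith⟩
  let u : ℕ → (Fin d → ℝ) → (Fin d → ℝ) := fun n =>
    (φ n).normed volume ⋆[ContinuousLinearMap.lsmul ℝ ℝ, volume] v
  let g : Fin d → Fin d → (Fin d → ℝ) → ℝ := fun i j y => fderiv ℝ v y (Pi.single j 1) i
  have hgc : ∀ i j, Continuous (g i j) := fun i j =>
    (continuous_apply i).comp ((hv.continuous_fderiv one_ne_zero).clm_apply continuous_const)
  -- uniform bound on g
  obtain ⟨C₀, hC₀⟩ := (hv.continuous_fderiv one_ne_zero).bounded_above_of_compact_support (hcv.fderiv ℝ)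
  set C := max C₀ 0 with hCdef
  have hCnn : 0 ≤ C := le_max_right _ _
  have hC : ∀ i j y, |g i j y| ≤ C := by
    intro i j y
    have h1 : |g i j y| ≤ ‖fderiv ℝ v y (Pi.single j 1)‖ := by
      have := norm_le_pi_norm (fderiv ℝ v y (Pi.single j 1)) i
      simpa [g, Real.norm_eq_abs] using this
    have h2 : ‖fderiv ℝ v y (Pi.single j 1)‖
        ≤ ‖fderiv ℝ v y‖ * ‖(Pi.single j (1:ℝ) : Fin d → ℝ)‖ :=
      (fderiv ℝ v y).le_opNorm _
    have h3 : ‖(Pi.single j (1:ℝ) : Fin d → ℝ)‖ = 1 := by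
      rw [Pi.norm_single]; simp
    calc |g i j y| ≤ ‖fderiv ℝ v y‖ * 1 := by rw [← h3]; exact h1.trans h2
      _ ≤ C := by rw [mul_one]; exact (hC₀ y).trans (le_max_left _ _)
  -- smoothness and support of u n
  have hu2 : ∀ n, ContDiff ℝ 2 (u n) := fun n =>
    HasCompactSupport.contDiff_convolution_left _ ((φ n).hasCompactSupport_normed)
      ((φ n).contDiff_normed) (hv.continuous.locallyIntegrable)
  have hucs : ∀ n, HasCompactSupport (u n) := fun n =>
    HasCompactSupport.convolution _ ((φ n).hasCompactSupport_normed) hcv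
  have hpdu : ∀ n i j x, pd j (fun z => u n z i) x
      = ((φ n).normed volume ⋆[ContinuousLinearMap.lsmul ℝ ℝ, volume] g i j) x := fun n i j x =>
    pdu_eq hv hcv (φ n) ((hu2 n).differentiable two_ne_zero) i j x
  -- uniform bound on convolutions
  have hconvbd : ∀ (n : ℕ) i j (x : Fin d → ℝ),
      |((φ n).normed volume ⋆[ContinuousLinearMap.lsmul ℝ ℝ, volume] g i j) x| ≤ C := by
    intro n i j x
    rw [convolution_def]
    have hb : Integrable (fun t => (φ n).normed volume t * C) volume :=
      ((φ n).integrable_normed).mul_const C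
    have hle : ∀ t : Fin d → ℝ,
        ‖ContinuousLinearMap.lsmul ℝ ℝ ((φ n).normed volume t) (g i j (x - t))‖
          ≤ (φ n).normed volume t * C := by
      intro t
      simp only [ContinuousLinearMap.lsmul_apply, smul_eq_mul, Real.norm_eq_abs, abs_mul,
        abs_of_nonneg ((φ n).nonneg_normed t)]
      exact mul_le_mul_of_nonneg_left (hC i j _) ((φ n).nonneg_normed t)
    have := norm_integral_le_of_norm_le hb (Filter.Eventually.of_forall hle)
    rw [Real.norm_eq_abs] at this
    refine this.trans ?_
    rw [integral_mul_const, (φ n).integral_normed, one_mul]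
  -- support control
  set K : Set (Fin d → ℝ) := Metric.closedBall (0 : Fin d → ℝ) 1 + tsupport (fderiv ℝ v) with hKdef
  have hK : IsCompact K := (isCompact_closedBall _ _).add (hcv.fderiv ℝ)
  have hsupp : ∀ (n : ℕ) i j (x : Fin d → ℝ), x ∉ K →
      ((φ n).normed volume ⋆[ContinuousLinearMap.lsmul ℝ ℝ, volume] g i j) x = 0 := by
    intro n i j x hx
    have hsub : Function.support
        ((φ n).normed volume ⋆[ContinuousLinearMap.lsmul ℝ ℝ, volume] g i j) ⊆ K := by
      refine (support_convolution_subset _).trans ?_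
      apply Set.add_subset_add
      · rw [(φ n).support_normed_eq]
        refine Metric.ball_subset_closedBall.trans (Metric.closedBall_subset_closedBall ?_)
        have h1 : (1:ℝ) ≤ (n:ℝ) + 1 := by
          have : (0:ℝ) ≤ (n:ℝ) := Nat.cast_nonneg n
          linarith
        calc (φ n).rOut = ((n:ℝ)+1)⁻¹ := rfl
          _ ≤ 1 := by rw [inv_le_one_iff₀]; right; exact h1
      · intro y hy
        have : fderiv ℝ v y ≠ 0 := by
          intro h
          apply hy
          simp [g, h]
        exact subset_closure this
    by_contra h
    exact hx (hsub h)
  -- continuity of the integrands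
  have hcontF : ∀ n, Continuous (fun x =>
      ∑ i, ∑ j, pd j (fun z => u n z i) x * pd i (fun z => u n z j) x) := by
    intro n
    apply continuous_finset_sum
    intro i _
    apply continuous_finset_sum
    intro j _
    exact (continuous_pd (comp_i ((hu2 n).of_le one_le_two) i) j).mul
      (continuous_pd (comp_i ((hu2 n).of_le one_le_two) j) i)
  -- dominated convergence
  set bound : (Fin d → ℝ) → ℝ := K.indicator (fun _ => (d:ℝ)^2 * C^2) with hbdef
  have hbint : Integrable bound volume := by
    apply (integrableOn_const hK.measure_lt_top.ne).integrable_indicator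
    exact hK.isClosed.measurableSet
  have hbound : ∀ n, ∀ x, ‖∑ i, ∑ j, pd j (fun z => u n z i) x * pd i (fun z => u n z j) x‖
      ≤ bound x := by
    intro n x
    by_cases hx : x ∈ K
    · rw [hbdef, Set.indicator_of_mem hx]
      rw [Real.norm_eq_abs]
      calc |∑ i, ∑ j, pd j (fun z => u n z i) x * pd i (fun z => u n z j) x|
          ≤ ∑ i, ∑ j, |pd j (fun z => u n z i) x * pd i (fun z => u n z j) x| :=
            (Finset.abs_sum_le_sum_abs _ _).trans
              (Finset.sum_le_sum fun i _ => Finset.abs_sum_le_sum_abs _ _)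
        _ ≤ ∑ _i : Fin d, ∑ _j : Fin d, C * C := by
            apply Finset.sum_le_sum; intro i _
            apply Finset.sum_le_sum; intro j _
            rw [abs_mul, hpdu n i j x, hpdu n j i x]
            exact mul_le_mul (hconvbd n i j x) (hconvbd n j i x) (abs_nonneg _) hCnn
        _ = (d:ℝ)^2 * C^2 := by
            simp [Finset.sum_const, Finset.card_univ]
            ring
    · rw [hbdef, Set.indicator_of_notMem hx]
      have : ∀ i j : Fin d, pd j (fun z => u n z i) x = 0 := fun i j => by
        rw [hpdu n i j x]; exact hsupp n i j x hx
      simp [this]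
  have hφr : Tendsto (fun n : ℕ => (φ n).rOut) atTop (𝓝 0) := by
    have : (fun n : ℕ => (φ n).rOut) = fun n : ℕ => 1/((n:ℝ)+1) := by
      funext n; rw [one_div]
    rw [this]
    exact tendsto_one_div_add_atTop_nhds_zero_nat
  have hlim : ∀ x : Fin d → ℝ, Tendsto
      (fun n => ∑ i, ∑ j, pd j (fun z => u n z i) x * pd i (fun z => u n z j) x) atTop
      (𝓝 (∑ i, ∑ j, pd j (fun z => v z i) x * pd i (fun z => v z j) x)) := by
    intro x
    have hterm : ∀ i j : Fin d, Tendsto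
        (fun n => pd j (fun z => u n z i) x * pd i (fun z => u n z j) x) atTop
        (𝓝 (pd j (fun z => v z i) x * pd i (fun z => v z j) x)) := by
      intro i j
      have t1 : Tendsto (fun n => pd j (fun z => u n z i) x) atTop (𝓝 (g i j x)) := by
        simp only [hpdu]
        exact ContDiffBump.convolution_tendsto_right_of_continuous hφr (hgc i j) x
      have t2 : Tendsto (fun n => pd i (fun z => u n z j) x) atTop (𝓝 (g j i x)) := by
        simp only [hpdu]
        exact ContDiffBump.convolution_tendsto_right_of_continuous hφr (hgc j i) x
      have e1 : pd j (fun z => v z i) x = g i j x := pd_proj (hv.differentiable one_ne_zero) i j x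
      have e2 : pd i (fun z => v z j) x = g j i x := pd_proj (hv.differentiable one_ne_zero) j i x
      rw [e1, e2]
      exact t1.mul t2
    exact tendsto_finset_sum _ fun i _ => tendsto_finset_sum _ fun j _ => hterm i j
  have htend : Tendsto
      (fun n => ∫ x, ∑ i, ∑ j, pd j (fun z => u n z i) x * pd i (fun z => u n z j) x) atTop
      (𝓝 (∫ x, ∑ i, ∑ j, pd j (fun z => v z i) x * pd i (fun z => v z j) x)) := by
    apply tendsto_integral_of_dominated_convergence bound
      (fun n => (hcontF n).aestronglyMeasurable) hbint
      (fun n => Filter.Eventually.of_forall (hbound n))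
      (Filter.Eventually.of_forall hlim)
  exact ge_of_tendsto' htend (fun n => korn_smooth (hu2 n) (hucs n))



lemma symGradSq_eq (v : (Fin d → ℝ) → Fin d → ℝ) (x : Fin d → ℝ) :
    symGradSq v x = (1/2) * gradSq v x
      + (1/2) * ∑ i, ∑ j, pd j (fun z => v z i) x * pd i (fun z => v z j) x := by
  classical
  simp only [symGradSq, gradSq]
  set A : Fin d → Fin d → ℝ := fun i j => pd j (fun z => v z i) x with hA
  have hcomm : ∑ i, ∑ j, (A j i)^2 = ∑ i, ∑ j, (A i j)^2 := Finset.sum_comm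
  calc ∑ i, ∑ j, ((A i j + A j i)/2)^2
      = ∑ i, ∑ j, ((A i j)^2/4 + (A j i)^2/4 + (A i j * A j i)/2) :=
        Finset.sum_congr rfl fun i _ => Finset.sum_congr rfl fun j _ => by ring
    _ = (∑ i, ∑ j, (A i j)^2)/4 + (∑ i, ∑ j, (A j i)^2)/4
          + (∑ i, ∑ j, A i j * A j i)/2 := by
        simp [Finset.sum_add_distrib, Finset.sum_div]
    _ = (1/2) * (∑ i, ∑ j, (A i j)^2) + (1/2) * (∑ i, ∑ j, A i j * A j i) := by
        rw [hcomm]; ring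

lemma stab_pt (σ G B : ℝ) {p a w : Fin d → ℝ}
    (hw : ∑ i, (w i)^2 ≤ G^2 * B) :
    -((1/2)*(∑ i, (p i)^2) + σ^2*(∑ i, (a i)^2) + 4*(G^2*B))
      ≤ ∑ i, p i * (σ * a i - 2 * w i) := by
  classical
  have h1 : (0:ℝ) ≤ ∑ i, (p i/2 + σ * a i)^2 := Finset.sum_nonneg fun i _ => sq_nonneg _
  have h2 : (0:ℝ) ≤ ∑ i, (p i/2 - 2 * w i)^2 := Finset.sum_nonneg fun i _ => sq_nonneg _
  have e1 : ∑ i, (p i/2 + σ * a i)^2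
      = (∑ i, (p i)^2)/4 + σ*(∑ i, p i * a i) + σ^2*(∑ i, (a i)^2) := by
    calc ∑ i, (p i/2 + σ * a i)^2
        = ∑ i, ((p i)^2/4 + σ*(p i * a i) + σ^2*((a i)^2)) :=
          Finset.sum_congr rfl fun i _ => by ring
      _ = (∑ i, (p i)^2)/4 + σ*(∑ i, p i * a i) + σ^2*(∑ i, (a i)^2) := by
          rw [Finset.sum_add_distrib, Finset.sum_add_distrib, ← Finset.sum_div,
            ← Finset.mul_sum, ← Finset.mul_sum]
  have e2 : ∑ i, (p i/2 - 2 * w i)^2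
      = (∑ i, (p i)^2)/4 - 2*(∑ i, p i * w i) + 4*(∑ i, (w i)^2) := by
    calc ∑ i, (p i/2 - 2 * w i)^2
        = ∑ i, ((p i)^2/4 - 2*(p i * w i) + 4*((w i)^2)) :=
          Finset.sum_congr rfl fun i _ => by ring
      _ = (∑ i, (p i)^2)/4 - 2*(∑ i, p i * w i) + 4*(∑ i, (w i)^2) := by
          rw [Finset.sum_add_distrib, Finset.sum_sub_distrib, ← Finset.sum_div,
            ← Finset.mul_sum, ← Finset.mul_sum]
  have e3 : ∑ i, p i * (σ * a i - 2 * w i)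
      = σ*(∑ i, p i * a i) - 2*(∑ i, p i * w i) := by
    calc ∑ i, p i * (σ * a i - 2 * w i)
        = ∑ i, (σ*(p i * a i) - 2*(p i * w i)) :=
          Finset.sum_congr rfl fun i _ => by ring
      _ = σ*(∑ i, p i * a i) - 2*(∑ i, p i * w i) := by
          rw [Finset.sum_sub_distrib, ← Finset.mul_sum, ← Finset.mul_sum]
  rw [e1] at h1
  rw [e2] at h2
  rw [e3]
  linarith


lemma hcs_fsum {ι : Type*} {s : Finset ι} {f : ι → (Fin d → ℝ) → ℝ}
    (h : ∀ i ∈ s, HasCompactSupport (f i)) :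
    HasCompactSupport (fun x => ∑ i ∈ s, f i x) := by
  classical
  induction s using Finset.induction_on with
  | empty => simp only [Finset.sum_empty]; exact HasCompactSupport.zero
  | @insert a s ha ih =>
    simp only [Finset.sum_insert ha]
    exact (h a (Finset.mem_insert_self a s)).add
      (ih fun i hi => h i (Finset.mem_insert_of_mem hi))

set_option maxHeartbeats 1000000 in
/-- Coercivity of the stress-divergence stabilised bilinear form (boundary-free case):
under `0 < δ ≤ min{1/(3σ), ν_min/(12G²)}` (the second bound vacuous when `G = 0`),
`A_SD((v,q),(v,q)) ≥ (1/2)|||(v,q)|||²`. -/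
theorem coercivity_SD {d : ℕ}
    (σ ν_min G δ : ℝ) (hσ : 0 < σ) (hν_min : 0 < ν_min) (hG : 0 ≤ G)
    (ν : (Fin d → ℝ) → ℝ) (hν : ContDiff ℝ 1 ν)
    (hlb : ∀ x, ν_min ≤ ν x)
    (hgrad : ∀ x, Real.sqrt (∑ j, (pd j ν x) ^ 2) ≤ G)
    (hδ0 : 0 < δ) (hδ1 : δ ≤ 1 / (3 * σ))
    (hδ2 : G ≠ 0 → δ ≤ ν_min / (12 * G ^ 2))
    (v : (Fin d → ℝ) → Fin d → ℝ) (hv : ContDiff ℝ 1 v) (hvsupp : HasCompactSupport v)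
    (q : (Fin d → ℝ) → ℝ) (hq : ContDiff ℝ 1 q) (hqsupp : HasCompactSupport q) :
    σ * (∫ x, ∑ i, (v x i) ^ 2)
      + 2 * (∫ x, ν x * symGradSq v x)
      + δ * (∫ x, ∑ i, (pd i q x) ^ 2)
      + δ * (∫ x, ∑ i, pd i q x *
          (σ * v x i - 2 * ∑ j, pd i (fun z => v z j) x * pd j ν x))
      ≥ (1 / 2) * (σ * (∫ x, ∑ i, (v x i) ^ 2)
          + ν_min * (∫ x, gradSq v x)
          + δ * (∫ x, ∑ i, (pd i q x) ^ 2)) := by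
  classical
  -- basic regularity facts
  have hvC1 : ∀ i : Fin d, ContDiff ℝ 1 (fun z => v z i) := fun i => comp_i hv i
  have hvcs : ∀ i : Fin d, HasCompactSupport (fun z => v z i) := fun i => hcs_i hvsupp i
  have hpvc : ∀ i j : Fin d, Continuous (pd j (fun z => v z i)) := fun i j =>
    continuous_pd (hvC1 i) j
  have hpvs : ∀ i j : Fin d, HasCompactSupport (pd j (fun z => v z i)) := fun i j =>
    hcs_pd (hvcs i) j
  have hpqc : ∀ i : Fin d, Continuous (pd i q) := fun i => continuous_pd hq i
  have hpqs : ∀ i : Fin d, HasCompactSupport (pd i q) := fun i => hcs_pd hqsupp i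
  have hpνc : ∀ j : Fin d, Continuous (pd j ν) := fun j => continuous_pd hν j
  -- integrability
  have iA : Integrable (fun x => ∑ i, (v x i) ^ 2) volume := by
    refine integ (continuous_finset_sum _ fun i _ => ((hvC1 i).continuous.pow 2)) ?_
    exact hcs_fsum fun i _ =>
      (hvcs i).comp_left (g := fun t : ℝ => t ^ 2) (by norm_num)
  have iB : Integrable (fun x => gradSq v x) volume := by
    simp only [gradSq]
    refine integ (continuous_finset_sum _ fun i _ => continuous_finset_sum _ fun j _ =>
      ((hpvc i j).pow 2)) ?_
    exact hcs_fsum fun i _ => hcs_fsum fun j _ =>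
      (hpvs i j).comp_left (g := fun t : ℝ => t ^ 2) (by norm_num)
  have iC : Integrable (fun x => ∑ i, (pd i q x) ^ 2) volume := by
    refine integ (continuous_finset_sum _ fun i _ => ((hpqc i).pow 2)) ?_
    exact hcs_fsum fun i _ =>
      (hpqs i).comp_left (g := fun t : ℝ => t ^ 2) (by norm_num)
  have icross : Integrable
      (fun x => ∑ i, ∑ j, pd j (fun z => v z i) x * pd i (fun z => v z j) x) volume := by
    refine integrable_finset_sum _ fun i _ => integrable_finset_sum _ fun j _ => ?_
    exact integ ((hpvc i j).mul (hpvc j i)) ((hpvs i j).mul_right)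
  have hsgc : Continuous (fun x => symGradSq v x) := by
    simp only [symGradSq]
    exact continuous_finset_sum _ fun i _ => continuous_finset_sum _ fun j _ =>
      (((hpvc i j).add (hpvc j i)).div_const 2).pow 2
  have hsgs : HasCompactSupport (fun x => symGradSq v x) := by
    simp only [symGradSq]
    exact hcs_fsum fun i _ => hcs_fsum fun j _ =>
      ((hpvs i j).add (hpvs j i)).comp_left (g := fun t : ℝ => (t / 2) ^ 2) (by norm_num)
  have isg : Integrable (fun x => symGradSq v x) volume := integ hsgc hsgs
  have iνsg : Integrable (fun x => ν x * symGradSq v x) volume :=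
    integ (hν.continuous.mul hsgc) (HasCompactSupport.mul_left hsgs)
  have iS : Integrable (fun x => ∑ i, pd i q x *
      (σ * v x i - 2 * ∑ j, pd i (fun z => v z j) x * pd j ν x)) volume := by
    refine integrable_finset_sum _ fun i _ => ?_
    refine integ ((hpqc i).mul ?_) ((hpqs i).mul_right)
    exact (continuous_const.mul (hvC1 i).continuous).sub
      (continuous_const.mul (continuous_finset_sum _ fun j _ => (hpvc j i).mul (hpνc j)))
  -- pointwise facts
  have hsg_nn : ∀ x, 0 ≤ symGradSq v x := by
    intro x; simp only [symGradSq]; positivity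
  have hpt : ∀ x : Fin d → ℝ,
      -((1/2)*(∑ i, (pd i q x) ^ 2) + σ^2*(∑ i, (v x i) ^ 2) + 4*(G^2* gradSq v x))
        ≤ ∑ i, pd i q x * (σ * v x i - 2 * ∑ j, pd i (fun z => v z j) x * pd j ν x) := by
    intro x
    have hGsq : ∑ j, (pd j ν x) ^ 2 ≤ G ^ 2 := by
      have h := hgrad x
      have h0 : (0:ℝ) ≤ ∑ j, (pd j ν x) ^ 2 := by positivity
      nlinarith [Real.sq_sqrt h0, Real.sqrt_nonneg (∑ j, (pd j ν x) ^ 2)]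
    have hw : ∑ i, (∑ j, pd i (fun z => v z j) x * pd j ν x) ^ 2 ≤ G ^ 2 * gradSq v x := by
      have hterm : ∀ i : Fin d, (∑ j, pd i (fun z => v z j) x * pd j ν x) ^ 2
          ≤ (∑ j, (pd i (fun z => v z j) x) ^ 2) * G ^ 2 := by
        intro i
        refine (Finset.sum_mul_sq_le_sq_mul_sq _ _ _).trans ?_
        exact mul_le_mul_of_nonneg_left hGsq (by positivity)
      refine (Finset.sum_le_sum fun i _ => hterm i).trans ?_
      rw [← Finset.sum_mul]
      have hswap : ∑ i, ∑ j, (pd i (fun z => v z j) x) ^ 2 = gradSq v x := by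
        simp only [gradSq]; exact Finset.sum_comm
      rw [hswap, mul_comm]
    exact stab_pt σ G (gradSq v x) hw
  -- integral-level inequalities (explicit)
  have F1 : 0 ≤ ∫ x, ∑ i, (v x i) ^ 2 := integral_nonneg fun x => by positivity
  have F2 : 0 ≤ ∫ x, gradSq v x := integral_nonneg fun x => by
    simp only [gradSq]; positivity
  have F3 : 0 ≤ ∫ x, ∑ i, (pd i q x) ^ 2 := integral_nonneg fun x => by positivity
  have F4 : 0 ≤ ∫ x, ∑ i, ∑ j, pd j (fun z => v z i) x * pd i (fun z => v z j) x :=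
    korn hv hvsupp
  have F5 : ν_min * ∫ x, symGradSq v x ≤ ∫ x, ν x * symGradSq v x := by
    have hmono := integral_mono (μ := volume) (isg.const_mul ν_min) iνsg
      (fun x => mul_le_mul_of_nonneg_right (hlb x) (hsg_nn x))
    rwa [integral_const_mul] at hmono
  have F6 : ∫ x, symGradSq v x = (1/2) * (∫ x, gradSq v x)
      + (1/2) * ∫ x, ∑ i, ∑ j, pd j (fun z => v z i) x * pd i (fun z => v z j) x := by
    rw [integral_congr_ae (Filter.Eventually.of_forall (symGradSq_eq v))]
    rw [integral_add (iB.const_mul _) (icross.const_mul _), integral_const_mul,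
      integral_const_mul]
  have iCA : Integrable
      (fun x => (1/2)*(∑ i, (pd i q x) ^ 2) + σ^2*(∑ i, (v x i) ^ 2)) volume := by
    exact (iC.const_mul _).add (iA.const_mul _)
  have iG4 : Integrable (fun x => 4*(G^2* gradSq v x)) volume := by
    exact (iB.const_mul _).const_mul _
  have s1 : ∫ x, ((1/2)*(∑ i, (pd i q x) ^ 2) + σ^2*(∑ i, (v x i) ^ 2)
        + 4*(G^2* gradSq v x))
      = (1/2)*(∫ x, ∑ i, (pd i q x) ^ 2) + σ^2*(∫ x, ∑ i, (v x i) ^ 2)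
        + 4*(G^2*(∫ x, gradSq v x)) := by
    rw [integral_add iCA iG4, integral_add (iC.const_mul _) (iA.const_mul _),
      integral_const_mul, integral_const_mul, integral_const_mul, integral_const_mul]
  have F7 : -((1/2)*(∫ x, ∑ i, (pd i q x) ^ 2) + σ^2*(∫ x, ∑ i, (v x i) ^ 2)
        + 4*(G^2*(∫ x, gradSq v x)))
      ≤ ∫ x, ∑ i, pd i q x *
          (σ * v x i - 2 * ∑ j, pd i (fun z => v z j) x * pd j ν x) := by
    have hlow : Integrable (fun x =>
        -((1/2)*(∑ i, (pd i q x) ^ 2) + σ^2*(∑ i, (v x i) ^ 2)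
          + 4*(G^2* gradSq v x))) volume := (iCA.add iG4).neg
    have hmono := integral_mono (μ := volume) hlow iS hpt
    rw [integral_neg, s1] at hmono
    exact hmono
  -- abstract the integrals
  set I1 : ℝ := ∫ x, ∑ i, (v x i) ^ 2 with hI1
  set I5 : ℝ := ∫ x, ν x * symGradSq v x with hI5
  set I3 : ℝ := ∫ x, ∑ i, (pd i q x) ^ 2 with hI3
  set I4 : ℝ := ∫ x, ∑ i, pd i q x *
      (σ * v x i - 2 * ∑ j, pd i (fun z => v z j) x * pd j ν x) with hI4
  set I2 : ℝ := ∫ x, gradSq v x with hI2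
  set I6 : ℝ := ∫ x, ∑ i, ∑ j, pd j (fun z => v z i) x * pd i (fun z => v z j) x with hI6
  set I7 : ℝ := ∫ x, symGradSq v x with hI7
  clear_value I1 I2 I3 I4 I5 I6 I7
  -- scalar inequalities
  have h3σ : δ * (3*σ) ≤ 1 := (le_div_iff₀ (by positivity)).mp hδ1
  have h12G : 12 * δ * G^2 ≤ ν_min := by
    rcases eq_or_ne G 0 with hG0 | hG0
    · rw [hG0]; nlinarith
    · have := (le_div_iff₀ (by positivity : (0:ℝ) < 12 * G^2)).mp (hδ2 hG0)
      nlinarith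
  have e1 : δ * σ^2 ≤ σ/3 := by nlinarith
  have e2 : 4 * (δ * G^2) ≤ ν_min/3 := by nlinarith
  have g1 : δ * (σ^2 * I1) ≤ (σ/3) * I1 := by
    have h := mul_le_mul_of_nonneg_right e1 F1
    calc δ * (σ^2 * I1) = δ * σ^2 * I1 := by ring
      _ ≤ σ/3 * I1 := h
      _ = (σ/3) * I1 := by ring
  have g2 : δ * (4*(G^2*I2)) ≤ (ν_min/3) * I2 := by
    have h := mul_le_mul_of_nonneg_right e2 F2
    calc δ * (4*(G^2*I2)) = 4 * (δ * G^2) * I2 := by ring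
      _ ≤ ν_min/3 * I2 := h
      _ = (ν_min/3) * I2 := by ring
  have g3 : δ * (-((1/2)*I3 + σ^2*I1 + 4*(G^2*I2))) ≤ δ * I4 :=
    mul_le_mul_of_nonneg_left F7 hδ0.le
  have g4 : 2 * (ν_min * I7) ≤ 2 * I5 := by linarith
  have g5 : ν_min * I7 = (ν_min/2) * I2 + (ν_min/2) * I6 := by rw [F6]; ring
  have g6 : 0 ≤ (ν_min/2) * I6 := by positivity
  have g7 : δ * (-((1/2)*I3 + σ^2*I1 + 4*(G^2*I2)))
      = -(δ * ((1/2)*I3) + δ * (σ^2*I1) + δ * (4*(G^2*I2))) := by ring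
  rw [ge_iff_le]
  linarith [g1, g2, g3, g4, g5, g6, g7, mul_nonneg hσ.le F1,
    mul_nonneg hν_min.le F2, mul_nonneg hδ0.le F3]
end

section
/- Let ν_min > 0, G ≥ 0, and let ν : ℝ^d → ℝ be continuously differentiable with ν(x) ≥ ν_min and |∇ν(x)| ≤ G for all x. Let σ ≥ 3G²/ν_min with σ > 0, and let δ satisfy 0 < δ ≤ ν_min/(12G²) (read as no constraint when G = 0). Then for every compactly supported, continuously differentiable v : ℝ^d → ℝ^d and q : ℝ^d → ℝ, the generalised Laplacian stabilised bilinear form satisfies σ∫|v|² + ∫ν|∇v|² + δ∫|∇q|² − ∫((∇v)ᵀ∇ν)·v − δ∫∇q·(2(∇v)ᵀ∇ν) ≥ (1/2)(σ∫|v|² + ν_min∫|∇v|² + δ∫|∇q|²), all integrals over ℝ^d. -/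
open MeasureTheory

/-- Young-type inequality: if `c² ≤ 4ab` with `a,b ≥ 0` then `c ≤ a + b`. -/
lemma young_aux (a b c : ℝ) (ha : 0 ≤ a) (hb : 0 ≤ b) (h : c ^ 2 ≤ 4 * (a * b)) :
    c ≤ a + b := by
  nlinarith [sq_nonneg (a - b), sq_nonneg (a + b - c), sq_nonneg (a + b + c)]

lemma pd_continuous {d : ℕ} {f : (Fin d → ℝ) → ℝ} (hf : ContDiff ℝ 1 f) (j : Fin d) :
    Continuous (pd j f) :=
  (hf.continuous_fderiv one_ne_zero).clm_apply continuous_const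

lemma pd_zero_of_nmem {d : ℕ} {f : (Fin d → ℝ) → ℝ} {x : Fin d → ℝ}
    (hx : x ∉ tsupport f) (j : Fin d) : pd j f x = 0 := by
  unfold pd
  rw [fderiv_of_notMem_tsupport _ hx]
  rfl

lemma tsupport_comp_subset' {d : ℕ} (v : (Fin d → ℝ) → Fin d → ℝ) (i : Fin d) :
    tsupport (fun z => v z i) ⊆ tsupport v := by
  apply closure_mono
  intro z hz hvz
  exact hz (by simp [Function.mem_support] at hvz ⊢; rw [hvz]; rfl)

/-- Coercivity of the generalised Laplacian stabilised bilinear form (boundary-free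
case): under `σ ≥ 3G²/ν_min`, `σ > 0` and `0 < δ ≤ ν_min/(12G²)` (vacuous for `G = 0`),
`A_GL((v,q),(v,q)) ≥ (1/2)|||(v,q)|||²`. -/
theorem coercivity_GL {d : ℕ}
    (σ ν_min G δ : ℝ) (hν_min : 0 < ν_min) (hG : 0 ≤ G)
    (ν : (Fin d → ℝ) → ℝ) (hν : ContDiff ℝ 1 ν)
    (hlb : ∀ x, ν_min ≤ ν x)
    (hgrad : ∀ x, Real.sqrt (∑ j, (pd j ν x) ^ 2) ≤ G)
    (hσ0 : 0 < σ) (hσ : σ ≥ 3 * G ^ 2 / ν_min)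
    (hδ0 : 0 < δ) (hδ : G ≠ 0 → δ ≤ ν_min / (12 * G ^ 2))
    (v : (Fin d → ℝ) → Fin d → ℝ) (hv : ContDiff ℝ 1 v) (hvsupp : HasCompactSupport v)
    (q : (Fin d → ℝ) → ℝ) (hq : ContDiff ℝ 1 q) (hqsupp : HasCompactSupport q) :
    σ * (∫ x, ∑ i, (v x i) ^ 2)
      + (∫ x, ν x * gradSq v x)
      + δ * (∫ x, ∑ i, (pd i q x) ^ 2)
      - (∫ x, ∑ i, (∑ j, pd i (fun z => v z j) x * pd j ν x) * v x i)
      - δ * (∫ x, ∑ i, pd i q x * (2 * ∑ j, pd i (fun z => v z j) x * pd j ν x))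
      ≥ (1 / 2) * (σ * (∫ x, ∑ i, (v x i) ^ 2)
          + ν_min * (∫ x, gradSq v x)
          + δ * (∫ x, ∑ i, (pd i q x) ^ 2)) := by
  classical
  -- component smoothness
  have hvc : ∀ i, ContDiff ℝ 1 fun z => v z i := fun i => (contDiff_pi.mp hv) i
  -- the compact set
  set K : Set (Fin d → ℝ) := tsupport v ∪ tsupport q with hKdef
  have hK : IsCompact K := hvsupp.union hqsupp
  -- vanishing of derivatives outside K
  have hpdv : ∀ x ∉ K, ∀ i j : Fin d, pd j (fun z => v z i) x = 0 := by
    intro x hx i j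
    have hxv : x ∉ tsupport v := fun h => hx (Or.inl h)
    exact pd_zero_of_nmem (fun h => hxv (tsupport_comp_subset' v i h)) j
  have hpdq : ∀ x ∉ K, ∀ j : Fin d, pd j q x = 0 := by
    intro x hx j
    exact pd_zero_of_nmem (fun h => hx (Or.inr h)) j
  have hv0 : ∀ x ∉ K, v x = 0 := by
    intro x hx
    exact image_eq_zero_of_notMem_tsupport (fun h => hx (Or.inl h))
  -- integrability helper
  have hint : ∀ f : (Fin d → ℝ) → ℝ, Continuous f → (∀ x ∉ K, f x = 0) →
      Integrable f := fun f hc h0 =>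
    hc.integrable_of_hasCompactSupport (HasCompactSupport.intro hK h0)
  -- the six integrands
  set f1 : (Fin d → ℝ) → ℝ := fun x => ∑ i, (v x i) ^ 2 with hf1def
  set f2 : (Fin d → ℝ) → ℝ := fun x => ν x * gradSq v x with hf2def
  set f3 : (Fin d → ℝ) → ℝ := fun x => ∑ i, (pd i q x) ^ 2 with hf3def
  set f4 : (Fin d → ℝ) → ℝ :=
    fun x => ∑ i, (∑ j, pd i (fun z => v z j) x * pd j ν x) * v x i with hf4def
  set f5 : (Fin d → ℝ) → ℝ :=
    fun x => ∑ i, pd i q x * (2 * ∑ j, pd i (fun z => v z j) x * pd j ν x) with hf5def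
  set f6 : (Fin d → ℝ) → ℝ := gradSq v with hf6def
  have hgradSq_cont : Continuous (gradSq v) := by
    unfold gradSq
    exact continuous_finset_sum _ fun i _ => continuous_finset_sum _ fun j _ =>
      (pd_continuous (hvc i) j).pow 2
  have hgradSq0 : ∀ x ∉ K, gradSq v x = 0 := by
    intro x hx
    unfold gradSq
    apply Finset.sum_eq_zero; intro i _
    apply Finset.sum_eq_zero; intro j _
    rw [hpdv x hx i j]; ring
  have i1 : Integrable f1 := by
    apply hint
    · exact continuous_finset_sum _ fun i _ => ((continuous_apply i).comp hv.continuous).pow 2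
    · intro x hx
      simp only [hf1def]
      apply Finset.sum_eq_zero; intro i _
      rw [hv0 x hx]; simp
  have i2 : Integrable f2 := by
    apply hint
    · exact hν.continuous.mul hgradSq_cont
    · intro x hx; simp only [hf2def, hf6def]; rw [hgradSq0 x hx]; ring
  have i3 : Integrable f3 := by
    apply hint
    · exact continuous_finset_sum _ fun i _ => (pd_continuous hq i).pow 2
    · intro x hx
      apply Finset.sum_eq_zero; intro i _
      rw [hpdq x hx i]; ring
  have i4 : Integrable f4 := by
    apply hint
    · exact continuous_finset_sum _ fun i _ =>
        (continuous_finset_sum _ fun j _ =>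
          (pd_continuous (hvc j) i).mul (pd_continuous hν j)).mul
          ((continuous_apply i).comp hv.continuous)
    · intro x hx
      apply Finset.sum_eq_zero; intro i _
      rw [hv0 x hx]; simp
  have i5 : Integrable f5 := by
    apply hint
    · exact continuous_finset_sum _ fun i _ =>
        (pd_continuous hq i).mul (continuous_const.mul
          (continuous_finset_sum _ fun j _ =>
            (pd_continuous (hvc j) i).mul (pd_continuous hν j)))
    · intro x hx
      apply Finset.sum_eq_zero; intro i _
      rw [hpdq x hx i]; ring
  have i6 : Integrable f6 := hint _ hgradSq_cont hgradSq0
  -- global constants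
  have hσν : 3 * G ^ 2 ≤ σ * ν_min := by
    rw [ge_iff_le, div_le_iff₀ hν_min] at hσ
    linarith
  have hδG : 12 * δ * G ^ 2 ≤ ν_min := by
    rcases eq_or_ne G 0 with h | h
    · simp [h]; linarith
    · have h12 : (0:ℝ) < 12 * G ^ 2 := by positivity
      have := hδ h
      rw [le_div_iff₀ h12] at this
      linarith
  -- pointwise inequality
  set h : (Fin d → ℝ) → ℝ := fun x =>
    σ * f1 x + f2 x + δ * f3 x - f4 x - δ * f5 x
      - (1 / 2) * (σ * f1 x + ν_min * f6 x + δ * f3 x) with hhdef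
  have hpt : ∀ x, 0 ≤ h x := by
    intro x
    set P : ℝ := ∑ i, (v x i) ^ 2 with hP
    set Q : ℝ := gradSq v x with hQ
    set R : ℝ := ∑ i, (pd i q x) ^ 2 with hR
    set g : Fin d → ℝ := fun j => pd j ν x with hg
    set w : Fin d → ℝ := fun i => ∑ j, pd i (fun z => v z j) x * g j with hw
    have hP0 : 0 ≤ P := Finset.sum_nonneg fun i _ => sq_nonneg _
    have hQ0 : 0 ≤ Q := Finset.sum_nonneg fun i _ =>
      Finset.sum_nonneg fun j _ => sq_nonneg _
    have hR0 : 0 ≤ R := Finset.sum_nonneg fun i _ => sq_nonneg _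
    have hGG0 : 0 ≤ ∑ j, (g j) ^ 2 := Finset.sum_nonneg fun j _ => sq_nonneg _
    have hGG : ∑ j, (g j) ^ 2 ≤ G ^ 2 := by
      have h1 := hgrad x
      have h2 : Real.sqrt (∑ j, (g j) ^ 2) ^ 2 = ∑ j, (g j) ^ 2 := Real.sq_sqrt hGG0
      nlinarith [Real.sqrt_nonneg (∑ j, (g j) ^ 2)]
    set W : ℝ := ∑ i, (w i) ^ 2 with hWdef
    have hW0 : 0 ≤ W := Finset.sum_nonneg fun i _ => sq_nonneg _
    have hW : W ≤ G ^ 2 * Q := by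
      have step : W ≤ (∑ i, ∑ j, (pd i (fun z => v z j) x) ^ 2) * (∑ j, (g j) ^ 2) := by
        rw [Finset.sum_mul]
        exact Finset.sum_le_sum fun i _ =>
          Finset.sum_mul_sq_le_sq_mul_sq Finset.univ (fun j => pd i (fun z => v z j) x) g
      have hsw : (∑ i, ∑ j, (pd i (fun z => v z j) x) ^ 2) = Q := by
        rw [hQ]; unfold gradSq; exact Finset.sum_comm
      rw [hsw] at step
      calc W ≤ Q * (∑ j, (g j) ^ 2) := step
        _ ≤ Q * G ^ 2 := mul_le_mul_of_nonneg_left hGG hQ0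
        _ = G ^ 2 * Q := mul_comm _ _
    -- Cauchy-Schwarz for the two cross terms
    have hf4sq : (f4 x) ^ 2 ≤ W * P := by
      have := Finset.sum_mul_sq_le_sq_mul_sq Finset.univ w (fun i => v x i)
      simpa [hf4def, hw, hWdef, hP] using this
    set s : ℝ := ∑ i, pd i q x * w i with hs
    have hssq : s ^ 2 ≤ R * W := by
      have := Finset.sum_mul_sq_le_sq_mul_sq Finset.univ (fun i => pd i q x) w
      simpa [hs, hR, hWdef] using this
    have hf5s : f5 x = 2 * s := by
      simp only [hf5def, hs, hw, hg, Finset.mul_sum]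
      exact Finset.sum_congr rfl fun i _ => Finset.sum_congr rfl fun j _ => by ring
    -- Young inequalities
    have h4 : f4 x ≤ σ / 2 * P + ν_min / 4 * Q := by
      apply young_aux _ _ _ (by positivity) (by positivity)
      have hWP : W * P ≤ (G ^ 2 * Q) * P := mul_le_mul_of_nonneg_right hW hP0
      have hstep := mul_le_mul_of_nonneg_right hσν (mul_nonneg hP0 hQ0)
      have hnn : 0 ≤ G ^ 2 * (P * Q) := mul_nonneg (sq_nonneg G) (mul_nonneg hP0 hQ0)
      linarith [hf4sq, hWP, hstep, hnn]
    have h5 : δ * (2 * s) ≤ ν_min / 4 * Q + δ / 2 * R := by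
      apply young_aux _ _ _ (by positivity) (by positivity)
      have hsw : s ^ 2 ≤ R * (G ^ 2 * Q) := le_trans hssq (mul_le_mul_of_nonneg_left hW hR0)
      have hmul : 4 * δ ^ 2 * s ^ 2 ≤ 4 * δ ^ 2 * (R * (G ^ 2 * Q)) :=
        mul_le_mul_of_nonneg_left hsw (by positivity)
      have hstep := mul_le_mul_of_nonneg_right hδG
        (mul_nonneg (mul_nonneg hδ0.le hQ0) hR0)
      have hnn : 0 ≤ δ ^ 2 * G ^ 2 * (Q * R) :=
        mul_nonneg (mul_nonneg (sq_nonneg δ) (sq_nonneg G)) (mul_nonneg hQ0 hR0)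
      linarith [hmul, hstep, hnn]
    have hνQ : ν_min * Q ≤ ν x * Q := mul_le_mul_of_nonneg_right (hlb x) hQ0
    have hf1x : f1 x = P := rfl
    have hf2x : f2 x = ν x * Q := rfl
    have hf3x : f3 x = R := rfl
    have hf6x : f6 x = Q := rfl
    simp only [hhdef, hf1x, hf2x, hf3x, hf6x, hf5s]
    linarith [h4, h5, hνQ]
  have hnn : (0:ℝ) ≤ ∫ x, h x := integral_nonneg hpt
  -- linearity of the integral
  have e1 : Integrable fun x => σ * f1 x := i1.const_mul σ
  have e3 : Integrable fun x => δ * f3 x := i3.const_mul δ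
  have e5 : Integrable fun x => δ * f5 x := i5.const_mul δ
  have e66 : Integrable fun x => ν_min * f6 x := i6.const_mul ν_min
  have e12 : Integrable fun x => σ * f1 x + f2 x := e1.add i2
  have e123 : Integrable fun x => σ * f1 x + f2 x + δ * f3 x := e12.add e3
  have e1234 : Integrable fun x => σ * f1 x + f2 x + δ * f3 x - f4 x := e123.sub i4
  have e12345 : Integrable fun x => σ * f1 x + f2 x + δ * f3 x - f4 x - δ * f5 x :=
    e1234.sub e5
  have e166 : Integrable fun x => σ * f1 x + ν_min * f6 x := e1.add e66
  have e1663 : Integrable fun x => σ * f1 x + ν_min * f6 x + δ * f3 x := e166.add e3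
  have e6 : Integrable fun x => (1 / 2) * (σ * f1 x + ν_min * f6 x + δ * f3 x) :=
    e1663.const_mul (1 / 2)
  have key : (∫ x, h x)
      = σ * (∫ x, f1 x) + (∫ x, f2 x) + δ * (∫ x, f3 x) - (∫ x, f4 x) - δ * (∫ x, f5 x)
        - (1 / 2) * (σ * (∫ x, f1 x) + ν_min * (∫ x, f6 x) + δ * (∫ x, f3 x)) := by
    simp only [hhdef]
    rw [integral_sub e12345 e6, integral_sub e1234 e5, integral_sub e123 i4,
      integral_add e12 e3, integral_add e1 i2,
      integral_const_mul, integral_const_mul, integral_const_mul, integral_const_mul,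
      integral_add e166 e3, integral_add e1 e66,
      integral_const_mul, integral_const_mul, integral_const_mul]
  rw [key] at hnn
  linarith [hnn]
end
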